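/- arXiv:1205.5196 — 3 statements merged into one kernel-verified Lean document; each statement's English description precedes it below -/
import Mathlib

section
/- Let V : ℝⁿ → ℝ be continuous, φ ∈ C^∞(ℝⁿ; ℝ), h > 0, and u ∈ C_c^∞(ℝⁿ; ℂ). Then the following Agmon identity holds: Re ∫_{ℝⁿ} e^{2φ(x)/h} ( −h²Δu(x) + V(x)u(x) ) · conj(u(x)) dx = ∫_{ℝⁿ} |h∇(e^{φ/h}u)(x)|² dx + ∫_{ℝⁿ} ( V(x) − |∇φ(x)|² ) e^{2φ(x)/h} |u(x)|² dx. -/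
open MeasureTheory

/-- Partial derivative in the `i`-th coordinate direction of a `ℂ`-valued function on `ℝⁿ`. -/
noncomputable def pd {n : ℕ} (u : EuclideanSpace ℝ (Fin n) → ℂ)
    (i : Fin n) (x : EuclideanSpace ℝ (Fin n)) : ℂ :=
  fderiv ℝ u x (EuclideanSpace.single i 1)

/-- The Laplacian of a `ℂ`-valued function on `ℝⁿ`, as the sum of second partials. -/
noncomputable def lap {n : ℕ} (u : EuclideanSpace ℝ (Fin n) → ℂ)
    (x : EuclideanSpace ℝ (Fin n)) : ℂ :=
  ∑ i : Fin n, pd (pd u i) i x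

section Aux

variable {n : ℕ}

lemma contDiff_pd {u : EuclideanSpace ℝ (Fin n) → ℂ} (hu : ContDiff ℝ (⊤ : ℕ∞) u) (i : Fin n) :
    ContDiff ℝ (⊤ : ℕ∞) (pd u i) := by
  have h1 : ContDiff ℝ (⊤ : ℕ∞) (fderiv ℝ u) := hu.fderiv_right (by simp)
  exact (ContinuousLinearMap.apply ℝ ℂ (EuclideanSpace.single i 1)).contDiff.comp h1

lemma hcs_pd {u : EuclideanSpace ℝ (Fin n) → ℂ} (hu : HasCompactSupport u) (i : Fin n) :
    HasCompactSupport (pd u i) :=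
  (hu.fderiv ℝ).comp_left (g := fun L : EuclideanSpace ℝ (Fin n) →L[ℝ] ℂ =>
    L (EuclideanSpace.single i 1)) rfl

lemma grad_norm_sq (φ : EuclideanSpace ℝ (Fin n) → ℝ) (x : EuclideanSpace ℝ (Fin n)) :
    ‖gradient φ x‖ ^ 2 = ∑ i : Fin n, (fderiv ℝ φ x (EuclideanSpace.single i 1)) ^ 2 := by
  have hcomp : ∀ i : Fin n, (gradient φ x) i = fderiv ℝ φ x (EuclideanSpace.single i 1) := by
    intro i
    have : inner (𝕜 := ℝ) (gradient φ x) (EuclideanSpace.single i (1:ℝ))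
        = fderiv ℝ φ x (EuclideanSpace.single i 1) :=
      InnerProductSpace.toDual_symm_apply
    rw [EuclideanSpace.inner_single_right] at this
    simpa using this
  rw [EuclideanSpace.norm_eq (gradient φ x), Real.sq_sqrt (by positivity)]
  exact Finset.sum_congr rfl fun i _ => by rw [← hcomp i]; simp [sq_abs]

lemma re_mul_conj_comm (z w : ℂ) :
    (z * (starRingEnd ℂ) w).re = (w * (starRingEnd ℂ) z).re := by
  simp [Complex.mul_re]; ring

lemma norm_sq_complex (z : ℂ) : ‖z‖ ^ 2 = Complex.normSq z := by
  rw [← Complex.sq_norm]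

lemma ofReal_norm_sq (z : ℂ) : ((‖z‖ ^ 2 : ℝ) : ℂ) = z * (starRingEnd ℂ) z := by
  rw [norm_sq_complex, Complex.mul_conj]

end Aux

/-- the Agmon identity
`Re ∫ e^{2φ/h} (−h²Δu + Vu) conj(u) = ∫ |h∇(e^{φ/h}u)|² + ∫ (V − |∇φ|²) e^{2φ/h} |u|²`. -/
theorem stmt_3 (n : ℕ) (hn : 1 ≤ n)
    (V : EuclideanSpace ℝ (Fin n) → ℝ) (hV : Continuous V)
    (φ : EuclideanSpace ℝ (Fin n) → ℝ) (hφ : ContDiff ℝ (⊤ : ℕ∞) φ)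
    (h : ℝ) (hh : 0 < h)
    (u : EuclideanSpace ℝ (Fin n) → ℂ) (hu : ContDiff ℝ (⊤ : ℕ∞) u)
    (husupp : HasCompactSupport u) :
    (∫ x, (Real.exp (2 * φ x / h) : ℂ) *
        ((-(h : ℂ) ^ 2 * lap u x + (V x : ℂ) * u x) * (starRingEnd ℂ) (u x))).re
      = (∫ x, ∑ i : Fin n,
            ‖(h : ℂ) * pd (fun y => Complex.exp ((φ y / h : ℝ) : ℂ) * u y) i x‖ ^ 2)
        + ∫ x, (V x - ‖gradient φ x‖ ^ 2) * Real.exp (2 * φ x / h) * ‖u x‖ ^ 2 := by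
  classical
  have hne : h ≠ 0 := ne_of_gt hh
  have hhC : (h : ℂ) ≠ 0 := by exact_mod_cast hne
  set e : Fin n → EuclideanSpace ℝ (Fin n) := fun i => EuclideanSpace.single i 1 with he
  have hφd : Differentiable ℝ φ := hφ.differentiable (by simp)
  have hud : Differentiable ℝ u := hu.differentiable (by simp)
  -- component of the gradient
  set a : Fin n → EuclideanSpace ℝ (Fin n) → ℝ := fun i x => fderiv ℝ φ x (e i) with ha
  have hacont : ∀ i, Continuous (a i) := fun i =>
    (ContinuousLinearMap.apply ℝ ℝ (e i)).continuous.comp (hφ.fderiv_right (m := (⊤ : ℕ∞)) (by simp)).continuous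
  -- weights
  set w : EuclideanSpace ℝ (Fin n) → ℝ := fun x => Real.exp (2 * φ x / h) with hw
  have hwcont : Continuous w :=
    Real.continuous_exp.comp ((continuous_const.mul hφ.continuous).div_const h)
  -- derivative of the weight (complex valued)
  have hWr : ∀ x, HasFDerivAt w (w x • ((2/h) • fderiv ℝ φ x)) x := by
    intro x
    have h2 : (fun y => 2 * φ y / h) = fun y => (2/h) * φ y := funext fun y => by ring
    have hmul : HasFDerivAt (fun y => 2 * φ y / h) ((2/h) • fderiv ℝ φ x) x := by
      rw [h2]; exact (hφd x).hasFDerivAt.const_mul _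
    have := (Real.hasDerivAt_exp (2 * φ x / h)).comp_hasFDerivAt x hmul
    simpa [Function.comp_def, hw] using this
  have hW : ∀ x, HasFDerivAt (fun y => ((w y : ℝ) : ℂ))
      (Complex.ofRealCLM.comp (w x • ((2/h) • fderiv ℝ φ x))) x := by
    intro x
    have := Complex.ofRealCLM.hasFDerivAt.comp x (hWr x)
    simpa [Function.comp_def] using this
  -- derivative of the half-weight (complex valued)
  have hBr : ∀ x, HasFDerivAt (fun y => Real.exp (φ y / h))
      (Real.exp (φ x / h) • ((1/h) • fderiv ℝ φ x)) x := by
    intro x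
    have h2 : (fun y => φ y / h) = fun y => (1/h) * φ y := funext fun y => by ring
    have hmul : HasFDerivAt (fun y => φ y / h) ((1/h) • fderiv ℝ φ x) x := by
      rw [h2]; exact (hφd x).hasFDerivAt.const_mul _
    have := (Real.hasDerivAt_exp (φ x / h)).comp_hasFDerivAt x hmul
    simpa [Function.comp_def] using this
  have hB : ∀ x, HasFDerivAt (fun y => ((Real.exp (φ y / h) : ℝ) : ℂ))
      (Complex.ofRealCLM.comp (Real.exp (φ x / h) • ((1/h) • fderiv ℝ φ x))) x := by
    intro x
    have := Complex.ofRealCLM.hasFDerivAt.comp x (hBr x)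
    simpa [Function.comp_def] using this
  -- conjugate of u
  set g : EuclideanSpace ℝ (Fin n) → ℂ := fun y => (starRingEnd ℂ) (u y) with hg
  have hgcd : ContDiff ℝ (⊤ : ℕ∞) g := by
    have : ContDiff ℝ (⊤ : ℕ∞) (fun y => Complex.conjCLE (u y)) :=
      (Complex.conjCLE : ℂ →L[ℝ] ℂ).contDiff.comp hu
    simpa [Complex.conjCLE_apply] using this
  have hgd : Differentiable ℝ g := hgcd.differentiable (by simp)
  have hgsupp : HasCompactSupport g := husupp.comp_left (by simp)
  have hgderiv : ∀ x, HasFDerivAt g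
      ((Complex.conjCLE : ℂ →L[ℝ] ℂ).comp (fderiv ℝ u x)) x := by
    intro x
    have := ((Complex.conjCLE.hasFDerivAt (x := u x))).comp x (hud x).hasFDerivAt
    simpa [Function.comp_def, Complex.conjCLE_apply, Complex.conjCAE_apply] using this
  have hgval : ∀ i x, fderiv ℝ g x (e i) = (starRingEnd ℂ) (pd u i x) := by
    intro i x
    rw [(hgderiv x).fderiv]
    simp [pd, Complex.conjCLE_apply, he]
  -- replace Complex.exp by Real.exp in the goal
  have hvfun : (fun y => Complex.exp ((φ y / h : ℝ) : ℂ) * u y)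
      = (fun y => ((Real.exp (φ y / h) : ℝ) : ℂ) * u y) := funext fun y => by
    rw [Complex.ofReal_exp]
  rw [hvfun]
  set v : EuclideanSpace ℝ (Fin n) → ℂ := fun y => ((Real.exp (φ y / h) : ℝ) : ℂ) * u y with hv
  have hpdv : ∀ (i : Fin n) x, pd v i x
      = ((Real.exp (φ x / h) : ℝ) : ℂ) * pd u i x
        + u x * ((Real.exp (φ x / h) * ((1/h) * a i x) : ℝ) : ℂ) := by
    intro i x
    show fderiv ℝ v x (e i) = _
    rw [hv]
    rw [HasFDerivAt.fderiv (f := fun y => ((Real.exp (φ y / h) : ℝ) : ℂ) * u y) ((hB x).mul (hud x).hasFDerivAt)]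
    simp [pd, he, ha, smul_eq_mul]
  -- the real integrands
  set P : Fin n → EuclideanSpace ℝ (Fin n) → ℝ :=
    fun i x => w x * (h^2 * ‖pd u i x‖^2) with hP
  set Q : Fin n → EuclideanSpace ℝ (Fin n) → ℝ :=
    fun i x => w x * (2*h*a i x * (pd u i x * (starRingEnd ℂ) (u x)).re) with hQ
  set R : Fin n → EuclideanSpace ℝ (Fin n) → ℝ :=
    fun i x => w x * (a i x^2 * ‖u x‖^2) with hR
  set S : EuclideanSpace ℝ (Fin n) → ℝ := fun x => V x * (w x * ‖u x‖^2) with hS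
  -- pointwise formula for the squared norm of h ∇(e^{φ/h} u)
  have hnorm : ∀ (i : Fin n) x, ‖(h:ℂ) * pd v i x‖^2 = R i x + P i x + Q i x := by
    intro i x
    have e1 : (h:ℂ) * pd v i x
        = ((Real.exp (φ x / h) : ℝ) : ℂ) * ((h:ℂ) * pd u i x + ((a i x : ℝ) : ℂ) * u x) := by
      rw [hpdv i x]
      push_cast
      field_simp
    rw [e1]
    rw [norm_sq_complex]
    rw [Complex.normSq_mul, Complex.normSq_ofReal, Complex.normSq_add]
    have hww : Real.exp (φ x / h) * Real.exp (φ x / h) = w x := by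
      rw [← Real.exp_add, hw]; congr 1; ring
    rw [hww]
    have e2 : ((h:ℂ) * pd u i x * (starRingEnd ℂ) (((a i x : ℝ):ℂ) * u x)).re
        = h * a i x * (pd u i x * (starRingEnd ℂ) (u x)).re := by
      rw [map_mul]
      have : (h:ℂ) * pd u i x * ((starRingEnd ℂ) ((a i x : ℝ):ℂ) * (starRingEnd ℂ) (u x))
          = (h : ℂ) * (((a i x : ℝ):ℂ) * (pd u i x * (starRingEnd ℂ) (u x))) := by
        rw [Complex.conj_ofReal]; ring
      rw [this, Complex.re_ofReal_mul, Complex.re_ofReal_mul]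
      ring
    rw [e2]
    rw [Complex.normSq_mul, Complex.normSq_mul, Complex.normSq_ofReal, Complex.normSq_ofReal]
    rw [hP, hQ, hR, ← norm_sq_complex, ← norm_sq_complex]
    ring
  -- the complex integrand for integration by parts
  set f : Fin n → EuclideanSpace ℝ (Fin n) → ℂ :=
    fun i y => ((w y : ℝ) : ℂ) * ((h:ℂ)^2 * pd u i y) with hf
  have hwsm : ContDiff ℝ (⊤ : ℕ∞) w := Real.contDiff_exp.comp ((contDiff_const.mul hφ).div_const h)
  have hwCsm : ContDiff ℝ (⊤ : ℕ∞) (fun y => ((w y : ℝ) : ℂ)) := Complex.ofRealCLM.contDiff.comp hwsm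
  have hfcd : ∀ i, ContDiff ℝ (⊤ : ℕ∞) (f i) := fun i =>
    hwCsm.mul (contDiff_const.mul (contDiff_pd hu i))
  have hfderiv : ∀ (i : Fin n) x, HasFDerivAt (f i)
      (((w x : ℝ) : ℂ) • ((h:ℂ)^2 • fderiv ℝ (pd u i) x)
        + ((h:ℂ)^2 * pd u i x) • (Complex.ofRealCLM.comp (w x • ((2/h) • fderiv ℝ φ x)))) x :=
    fun i x => (hW x).mul (((contDiff_pd hu i).differentiable (by simp) x).hasFDerivAt.const_mul _)
  have hfval : ∀ (i : Fin n) x, fderiv ℝ (f i) x (e i)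
      = ((w x : ℝ) : ℂ) * ((h:ℂ)^2 * pd (pd u i) i x)
        + ((h:ℂ)^2 * pd u i x) * ((w x * ((2/h) * a i x) : ℝ) : ℂ) := by
    intro i x
    rw [(hfderiv i x).fderiv]
    simp [pd, he, ha, smul_eq_mul]
  -- integration by parts
  have hupdcont : ∀ i, Continuous (pd u i) := fun i => (contDiff_pd hu i).continuous
  have hupdsupp : ∀ i, HasCompactSupport (pd u i) := fun i => hcs_pd husupp i
  have key : ∀ i : Fin n, (∫ x, f i x * (starRingEnd ℂ) (pd u i x))
      = - ∫ x, (((w x : ℝ) : ℂ) * ((h:ℂ)^2 * pd (pd u i) i x)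
          + ((h:ℂ)^2 * pd u i x) * ((w x * ((2/h) * a i x) : ℝ) : ℂ)) * g x := by
    intro i
    have hint1 : Integrable (fun x => fderiv ℝ (f i) x (e i) * g x) := by
      have hc : Continuous (fun x => fderiv ℝ (f i) x (e i)) := by
        have := (contDiff_pd (hfcd i) i).continuous
        exact this
      exact (hc.mul hgcd.continuous).integrable_of_hasCompactSupport
        (HasCompactSupport.mul_left hgsupp)
    have hint2 : Integrable (fun x => f i x * fderiv ℝ g x (e i)) := by
      have hc : Continuous (fun x => fderiv ℝ g x (e i)) := by
        have := (contDiff_pd hgcd i).continuous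
        exact this
      exact ((hfcd i).continuous.mul hc).integrable_of_hasCompactSupport
        (HasCompactSupport.mul_left (hcs_pd hgsupp i))
    have hint3 : Integrable (fun x => f i x * g x) :=
      ((hfcd i).continuous.mul hgcd.continuous).integrable_of_hasCompactSupport
        (HasCompactSupport.mul_left hgsupp)
    have ibp := integral_mul_fderiv_eq_neg_fderiv_mul_of_integrable
      hint1 hint2 hint3 (fun x _ => (hfcd i).differentiable (by simp) x) (fun x _ => hgd x)
    simp only [hgval, hfval] at ibp
    exact ibp
  -- integrability of the real integrands
  have hupd2cont : ∀ i : Fin n, Continuous (fun x => pd (pd u i) i x) := fun i =>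
    (contDiff_pd (contDiff_pd hu i) i).continuous
  have hnu : HasCompactSupport (fun x => ‖u x‖^2) :=
    husupp.comp_left (g := fun z : ℂ => ‖z‖^2) (by simp)
  have hnucont : Continuous (fun x => ‖u x‖^2) := (hu.continuous.norm).pow 2
  have hPint : ∀ i : Fin n, Integrable (P i) := by
    intro i
    refine Continuous.integrable_of_hasCompactSupport
      (hwcont.mul (continuous_const.mul (((hupdcont i).norm).pow 2))) ?_
    exact HasCompactSupport.mul_left (HasCompactSupport.mul_left
      ((hupdsupp i).comp_left (g := fun z : ℂ => ‖z‖^2) (by simp)))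
  have hQint : ∀ i : Fin n, Integrable (Q i) := by
    intro i
    refine Continuous.integrable_of_hasCompactSupport
      (hwcont.mul ((continuous_const.mul (hacont i)).mul
        (Complex.continuous_re.comp ((hupdcont i).mul hgcd.continuous)))) ?_
    have hsupp0 : HasCompactSupport (fun x => pd u i x * g x) :=
      HasCompactSupport.mul_left hgsupp
    have hsupp1 : HasCompactSupport (fun x => (pd u i x * g x).re) :=
      hsupp0.comp_left (g := fun z : ℂ => z.re) (by simp)
    exact HasCompactSupport.mul_left (HasCompactSupport.mul_left hsupp1)
  have hRint : ∀ i : Fin n, Integrable (R i) := by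
    intro i
    refine Continuous.integrable_of_hasCompactSupport
      (hwcont.mul (((hacont i).pow 2).mul hnucont)) ?_
    exact HasCompactSupport.mul_left (HasCompactSupport.mul_left hnu)
  have hSint : Integrable S := by
    refine Continuous.integrable_of_hasCompactSupport
      (hV.mul (hwcont.mul hnucont)) ?_
    exact HasCompactSupport.mul_left (HasCompactSupport.mul_left hnu)
  -- the complex integrands and their integrability
  have hT1int : ∀ i : Fin n, Integrable (fun x => f i x * (starRingEnd ℂ) (pd u i x)) := by
    intro i
    refine Continuous.integrable_of_hasCompactSupport
      ((hfcd i).continuous.mul (continuous_star.comp (hupdcont i))) ?_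
    exact HasCompactSupport.mul_left ((hupdsupp i).comp_left (by simp))
  have hXgint : ∀ i : Fin n, Integrable
      (fun x => ((w x : ℝ) : ℂ) * ((h:ℂ)^2 * pd (pd u i) i x) * g x) := by
    intro i
    refine Continuous.integrable_of_hasCompactSupport
      (((Complex.continuous_ofReal.comp hwcont).mul
        (continuous_const.mul (hupd2cont i))).mul hgcd.continuous) ?_
    exact HasCompactSupport.mul_left hgsupp
  have hYgint : ∀ i : Fin n, Integrable
      (fun x => ((h:ℂ)^2 * pd u i x) * ((w x * ((2/h) * a i x) : ℝ) : ℂ) * g x) := by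
    intro i
    refine Continuous.integrable_of_hasCompactSupport
      (((continuous_const.mul (hupdcont i)).mul
        (Complex.continuous_ofReal.comp (hwcont.mul (continuous_const.mul (hacont i))))).mul
        hgcd.continuous) ?_
    exact HasCompactSupport.mul_left hgsupp
  have hcWint : ∀ i : Fin n, Integrable
      (fun x => ((w x : ℝ) : ℂ) * (-(h:ℂ)^2 * pd (pd u i) i x * (starRingEnd ℂ) (u x))) := by
    intro i
    refine Continuous.integrable_of_hasCompactSupport
      ((Complex.continuous_ofReal.comp hwcont).mul
        (((continuous_const.mul (hupd2cont i)).mul (continuous_star.comp hu.continuous)))) ?_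
    exact HasCompactSupport.mul_left (HasCompactSupport.mul_left (husupp.comp_left (by simp)))
  -- rearranged integration by parts
  have c1 : ∀ i : Fin n,
      (∫ x, ((w x : ℝ) : ℂ) * (-(h:ℂ)^2 * pd (pd u i) i x * (starRingEnd ℂ) (u x)))
      = (∫ x, f i x * (starRingEnd ℂ) (pd u i x))
        + ∫ x, ((h:ℂ)^2 * pd u i x) * ((w x * ((2/h) * a i x) : ℝ) : ℂ) * g x := by
    intro i
    have c0 : (∫ x, ((w x : ℝ) : ℂ) * (-(h:ℂ)^2 * pd (pd u i) i x * (starRingEnd ℂ) (u x)))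
        = - ∫ x, ((w x : ℝ) : ℂ) * ((h:ℂ)^2 * pd (pd u i) i x) * g x := by
      rw [← integral_neg]
      congr 1
      funext x
      simp only [hg]
      ring
    have hsplit : (∫ x, (((w x : ℝ) : ℂ) * ((h:ℂ)^2 * pd (pd u i) i x)
          + ((h:ℂ)^2 * pd u i x) * ((w x * ((2/h) * a i x) : ℝ) : ℂ)) * g x)
        = (∫ x, ((w x : ℝ) : ℂ) * ((h:ℂ)^2 * pd (pd u i) i x) * g x)
          + ∫ x, ((h:ℂ)^2 * pd u i x) * ((w x * ((2/h) * a i x) : ℝ) : ℂ) * g x := by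
      rw [← integral_add (hXgint i) (hYgint i)]
      congr 1
      funext x
      ring
    linear_combination c0 - key i + hsplit
  -- real part of the integration-by-parts identity
  have keyRe : ∀ i : Fin n,
      (∫ x, (((w x : ℝ) : ℂ) * (-(h:ℂ)^2 * pd (pd u i) i x * (starRingEnd ℂ) (u x))).re)
      = (∫ x, P i x) + ∫ x, Q i x := by
    intro i
    have h1 := integral_re (μ := volume) (hcWint i)
    simp only [RCLike.re_to_complex] at h1
    rw [h1, c1 i, Complex.add_re]
    congr 1
    · have h2 := integral_re (μ := volume) (hT1int i)
      simp only [RCLike.re_to_complex] at h2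
      rw [← h2]
      congr 1
      funext x
      have : f i x * (starRingEnd ℂ) (pd u i x) = ((P i x : ℝ) : ℂ) := by
        simp only [hf, hP]
        rw [Complex.ofReal_mul, Complex.ofReal_mul, ofReal_norm_sq]
        push_cast
        ring
      rw [this, Complex.ofReal_re]
    · have h3 := integral_re (μ := volume) (hYgint i)
      simp only [RCLike.re_to_complex] at h3
      rw [← h3]
      congr 1
      funext x
      have : ((h:ℂ)^2 * pd u i x) * ((w x * ((2/h) * a i x) : ℝ) : ℂ) * g x
          = ((w x * ((2/h) * a i x) : ℝ) : ℂ) * (((h^2 : ℝ) : ℂ) * (pd u i x * (starRingEnd ℂ) (u x))) := by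
        simp only [hg]
        push_cast
        ring
      rw [this, Complex.re_ofReal_mul, Complex.re_ofReal_mul]
      simp only [hQ]
      field_simp
  -- integrability of the full left-hand side integrand
  have hlapcont : Continuous (lap u) := by
    have : Continuous (fun x => ∑ i : Fin n, pd (pd u i) i x) :=
      continuous_finset_sum _ (fun i _ => hupd2cont i)
    exact this
  have hbigint : Integrable
      (fun x => ((w x : ℝ) : ℂ) * ((-(h:ℂ)^2 * lap u x + ((V x : ℝ) : ℂ) * u x) * g x)) := by
    refine Continuous.integrable_of_hasCompactSupport
      ((Complex.continuous_ofReal.comp hwcont).mul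
        ((((continuous_const.mul hlapcont).add
          ((Complex.continuous_ofReal.comp hV).mul hu.continuous)).mul hgcd.continuous))) ?_
    exact HasCompactSupport.mul_left (HasCompactSupport.mul_left hgsupp)
  -- pointwise decomposition of the left-hand side integrand
  have hpt : ∀ x, (((w x : ℝ) : ℂ) * ((-(h:ℂ)^2 * lap u x + ((V x : ℝ) : ℂ) * u x) * g x)).re
      = (∑ i : Fin n, (((w x : ℝ) : ℂ)
          * (-(h:ℂ)^2 * pd (pd u i) i x * (starRingEnd ℂ) (u x))).re) + S x := by
    intro x
    have hbig : ((w x : ℝ) : ℂ) * ((-(h:ℂ)^2 * lap u x + ((V x : ℝ) : ℂ) * u x) * g x)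
        = (∑ i : Fin n, ((w x : ℝ) : ℂ)
            * (-(h:ℂ)^2 * pd (pd u i) i x * (starRingEnd ℂ) (u x))) + ((S x : ℝ) : ℂ) := by
      have hsum : (∑ i : Fin n, ((w x : ℝ) : ℂ)
            * (-(h:ℂ)^2 * pd (pd u i) i x * (starRingEnd ℂ) (u x)))
          = ((w x : ℝ) : ℂ) * (-(h:ℂ)^2 * lap u x * (starRingEnd ℂ) (u x)) := by
        rw [lap, Finset.mul_sum, Finset.sum_mul, Finset.mul_sum]
      rw [hsum]
      have hSx : ((S x : ℝ) : ℂ) = ((w x : ℝ) : ℂ) * (((V x : ℝ) : ℂ) * (u x * (starRingEnd ℂ) (u x))) := by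
        rw [hS, Complex.ofReal_mul, Complex.ofReal_mul, ofReal_norm_sq]
        ring
      rw [hSx]
      simp only [hg]
      ring
    rw [hbig, Complex.add_re, Complex.ofReal_re]
    congr 1
    exact (Complex.re_sum _ _).symm ▸ rfl
  -- the left-hand side
  have hLHS : (∫ x, ((w x : ℝ) : ℂ) * ((-(h:ℂ)^2 * lap u x + ((V x : ℝ) : ℂ) * u x) * g x)).re
      = (∑ i : Fin n, ((∫ x, P i x) + ∫ x, Q i x)) + ∫ x, S x := by
    rw [← RCLike.re_to_complex, ← integral_re hbigint]
    simp only [RCLike.re_to_complex]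
    have : (fun x => (((w x : ℝ) : ℂ) * ((-(h:ℂ)^2 * lap u x + ((V x : ℝ) : ℂ) * u x) * g x)).re)
        = fun x => (∑ i : Fin n, (((w x : ℝ) : ℂ)
            * (-(h:ℂ)^2 * pd (pd u i) i x * (starRingEnd ℂ) (u x))).re) + S x :=
      funext hpt
    rw [this]
    have hcWreint : ∀ i : Fin n, Integrable (fun x => (((w x : ℝ) : ℂ)
        * (-(h:ℂ)^2 * pd (pd u i) i x * (starRingEnd ℂ) (u x))).re) := by
      intro i
      refine Continuous.integrable_of_hasCompactSupport
        (Complex.continuous_re.comp ((Complex.continuous_ofReal.comp hwcont).mul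
          (((continuous_const.mul (hupd2cont i)).mul (continuous_star.comp hu.continuous))))) ?_
      refine HasCompactSupport.comp_left ?_ (by simp)
      exact HasCompactSupport.mul_left (HasCompactSupport.mul_left (husupp.comp_left (by simp)))
    rw [integral_add (f := fun x => ∑ i : Fin n, (((w x : ℝ) : ℂ)
        * (-(h:ℂ)^2 * pd (pd u i) i x * (starRingEnd ℂ) (u x))).re) (g := S)
        (integrable_finset_sum _ (fun i _ => hcWreint i)) hSint,
      integral_finset_sum (μ := volume) Finset.univ
        (f := fun (i : Fin n) x => (((w x : ℝ) : ℂ)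
          * (-(h:ℂ)^2 * pd (pd u i) i x * (starRingEnd ℂ) (u x))).re)
        (fun i _ => hcWreint i)]
    congr 1
    exact Finset.sum_congr rfl fun i _ => keyRe i
  -- the first right-hand side integral
  have hRHS1 : (∫ x, ∑ i : Fin n, ‖(h:ℂ) * pd v i x‖^2)
      = ∑ i : Fin n, ((∫ x, R i x) + (∫ x, P i x) + ∫ x, Q i x) := by
    have : (fun x => ∑ i : Fin n, ‖(h:ℂ) * pd v i x‖^2)
        = fun x => ∑ i : Fin n, (R i x + P i x + Q i x) :=
      funext fun x => Finset.sum_congr rfl fun i _ => hnorm i x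
    rw [this]
    rw [integral_finset_sum (μ := volume) Finset.univ (f := fun (i : Fin n) x => R i x + P i x + Q i x) (fun i _ => (((hRint i).add (hPint i)).add (hQint i)))]
    exact Finset.sum_congr rfl fun i _ => by
      rw [integral_add (f := fun x => R i x + P i x) (g := fun x => Q i x)
        ((hRint i).add (hPint i)) (hQint i),
        integral_add (f := fun x => R i x) (g := fun x => P i x) (hRint i) (hPint i)]
  -- the second right-hand side integral
  have hpt2 : ∀ x, (V x - ‖gradient φ x‖^2) * w x * ‖u x‖^2 = S x - ∑ i : Fin n, R i x := by
    intro x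
    simp only [hR, hS, ha, he]
    rw [grad_norm_sq φ x]
    rw [show ∑ i : Fin n, w x * ((fderiv ℝ φ x (EuclideanSpace.single i 1))^2 * ‖u x‖^2)
        = (∑ i : Fin n, (fderiv ℝ φ x (EuclideanSpace.single i 1))^2) * (w x * ‖u x‖^2) from by
      rw [Finset.sum_mul]
      exact Finset.sum_congr rfl fun i _ => by ring]
    ring
  have hRHS2 : (∫ x, (V x - ‖gradient φ x‖^2) * w x * ‖u x‖^2)
      = (∫ x, S x) - ∑ i : Fin n, ∫ x, R i x := by
    have : (fun x => (V x - ‖gradient φ x‖^2) * w x * ‖u x‖^2)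
        = fun x => S x - ∑ i : Fin n, R i x := funext hpt2
    rw [this, integral_sub (f := S) (g := fun x => ∑ i : Fin n, R i x)
        hSint (integrable_finset_sum _ (fun i _ => hRint i)),
      integral_finset_sum (μ := volume) Finset.univ (f := fun (i : Fin n) x => R i x)
        (fun i _ => hRint i)]
  -- conclusion
  rw [hLHS, hRHS1, hRHS2]
  simp only [Finset.sum_add_distrib]
  ring
end

section
/- Let n ≥ 1, ν₀ > 0 and m < −n be real. There is a constant C > 0, depending only on n and m, with the following property: if f : 𝒜_{ν₀} → ℂ is holomorphic on the strip 𝒜_{ν₀} and satisfies |f(ξ)| ≤ M·⟨Re ξ⟩^m for all ξ ∈ 𝒜_{ν₀}, then for every ν₁ ∈ (0, ν₀) and every z ∈ ℝⁿ one has |∫_{ℝⁿ} e^{i z·ξ} f(ξ) dξ| ≤ C·M·e^{−ν₁|z|}. -/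
open MeasureTheory

/-- The Euclidean norm of the imaginary part of a point of `ℂⁿ`. -/
noncomputable def imNorm {n : ℕ} (ξ : EuclideanSpace ℂ (Fin n)) : ℝ :=
  Real.sqrt (∑ i : Fin n, (ξ i).im ^ 2)

/-- The Japanese bracket `⟨Re ξ⟩ = (1 + |Re ξ|²)^(1/2)` of a point of `ℂⁿ`. -/
noncomputable def japRe {n : ℕ} (ξ : EuclideanSpace ℂ (Fin n)) : ℝ :=
  Real.sqrt (1 + ∑ i : Fin n, (ξ i).re ^ 2)

/-- The canonical embedding `ℝⁿ → ℂⁿ`. -/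
noncomputable def toCn {n : ℕ} (ξ : EuclideanSpace ℝ (Fin n)) : EuclideanSpace ℂ (Fin n) :=
  (WithLp.equiv 2 (Fin n → ℂ)).symm fun i => (ξ i : ℂ)

section aux

open Complex Filter Set Topology intervalIntegral

/-- One-dimensional contour shift for a function holomorphic on a horizontal strip with
uniform decay. -/
lemma shift1d (g : ℂ → ℂ) (a : ℝ) (ha : 0 ≤ a)
    (hd : ∀ w : ℂ, w.im ∈ Set.Icc 0 a → DifferentiableAt ℂ g w)
    (B : ℝ → ℝ)
    (hgB : ∀ w : ℂ, w.im ∈ Set.Icc 0 a → ‖g w‖ ≤ B w.re)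
    (hBi : Integrable B)
    (hBtop : Tendsto B atTop (nhds 0)) (hBbot : Tendsto B atBot (nhds 0)) :
    ∫ x : ℝ, g x = ∫ x : ℝ, g (x + a * I) := by
  have him0 : ∀ x : ℝ, (x : ℂ).im ∈ Set.Icc 0 a := fun x => by simp [ha]
  have hima : ∀ x : ℝ, ((x : ℂ) + a * I).im ∈ Set.Icc 0 a := fun x => by simp [ha, le_refl]
  have hcont0 : Continuous fun x : ℝ => g x := by
    refine continuous_iff_continuousAt.2 fun x => ?_
    exact (hd _ (him0 x)).continuousAt.comp continuous_ofReal.continuousAt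
  have hconta : Continuous fun x : ℝ => g (x + a * I) := by
    refine continuous_iff_continuousAt.2 fun x => ?_
    have hc : ContinuousAt (fun x : ℝ => (x : ℂ) + a * I) x := by fun_prop
    exact ContinuousAt.comp (x := x) (g := g) (hd _ (hima x)).continuousAt hc
  have hInt0 : Integrable fun x : ℝ => g x := by
    refine hBi.mono' hcont0.aestronglyMeasurable (ae_of_all _ fun x => ?_)
    simpa using hgB _ (him0 x)
  have hInta : Integrable fun x : ℝ => g (x + a * I) := by
    refine hBi.mono' hconta.aestronglyMeasurable (ae_of_all _ fun x => ?_)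
    simpa using hgB _ (hima x)
  have C : ∀ T : ℝ, (∫ x : ℝ in -T..T, g x) - (∫ x : ℝ in -T..T, g (x + a * I))
      + I • (∫ y : ℝ in (0:ℝ)..a, g (T + y * I))
      - I • (∫ y : ℝ in (0:ℝ)..a, g (-T + y * I)) = 0 := by
    intro T
    have := integral_boundary_rect_eq_zero_of_differentiableOn g (-T) (T + a * I)
      (by
        intro w hw
        rw [mem_reProdIm] at hw
        refine (hd w ?_).differentiableWithinAt
        have h2 := hw.2
        simp only [neg_im, ofReal_im, neg_zero, add_im, mul_im, I_im, I_re, ofReal_re,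
          ofReal_im, mul_one, mul_zero, zero_add, add_zero] at h2
        rwa [Set.uIcc_of_le ha] at h2)
    simpa only [neg_im, ofReal_im, neg_zero, ofReal_zero, zero_mul, add_zero, neg_re,
      ofReal_re, add_re, mul_re, I_re, mul_zero, I_im, tsub_zero, add_im, mul_im,
      mul_one, zero_add, smul_eq_mul, ofReal_neg] using this
  have side : ∀ s : ℝ → ℝ, Tendsto (fun T => B (s T)) atTop (𝓝 0) →
      Tendsto (fun T : ℝ => ∫ y : ℝ in (0:ℝ)..a, g (s T + y * I)) atTop (𝓝 0) := by
    intro s hs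
    refine squeeze_zero_norm (fun T => ?_) (by simpa using hs.const_mul a)
    have : ∀ y ∈ Set.uIoc (0:ℝ) a, ‖g (s T + y * I)‖ ≤ B (s T) := by
      intro y hy
      have hy' : y ∈ Set.Icc 0 a := by
        rw [Set.uIoc_of_le ha] at hy; exact ⟨hy.1.le, hy.2⟩
      have := hgB (s T + y * I) (by simpa using hy')
      simpa using this
    have := intervalIntegral.norm_integral_le_of_norm_le_const (C := B (s T)) this
    calc ‖∫ y : ℝ in (0:ℝ)..a, g (s T + y * I)‖ ≤ B (s T) * |a - 0| := this
      _ = a * B (s T) := by rw [sub_zero, _root_.abs_of_nonneg ha]; ring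
  have sideR := side id hBtop
  have sideL := side (fun T => -T) (hBbot.comp tendsto_neg_atTop_atBot)
  have lim1 : Tendsto (fun T : ℝ => ∫ x : ℝ in -T..T, g x) atTop (𝓝 (∫ x : ℝ, g x)) :=
    intervalIntegral_tendsto_integral hInt0 tendsto_neg_atTop_atBot tendsto_id
  have lim2 : Tendsto (fun T : ℝ => ∫ x : ℝ in -T..T, g (x + a * I)) atTop
      (𝓝 (∫ x : ℝ, g (x + a * I))) :=
    intervalIntegral_tendsto_integral hInta tendsto_neg_atTop_atBot tendsto_id
  have key : Tendsto (fun T : ℝ => ∫ x : ℝ in -T..T, g x) atTop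
      (𝓝 (∫ x : ℝ, g (x + a * I))) := by
    have heq : (fun T : ℝ => ∫ x : ℝ in -T..T, g x)
        = fun T : ℝ => (∫ x : ℝ in -T..T, g (x + a * I))
          - I • (∫ y : ℝ in (0:ℝ)..a, g (T + y * I))
          + I • (∫ y : ℝ in (0:ℝ)..a, g (-T + y * I)) := by
      ext T
      have := C T
      linear_combination this
    rw [heq]
    have := ((lim2.sub ((tendsto_const_nhds (x := I)).smul sideR)).add
      ((tendsto_const_nhds (x := I)).smul sideL))
    simpa using this
  exact tendsto_nhds_unique lim1 key

end aux

open Complex Filter Set Topology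

section basic
variable {n : ℕ}

lemma toCn_apply (ξ : EuclideanSpace ℝ (Fin n)) (i : Fin n) : toCn ξ i = (ξ i : ℂ) := rfl

lemma continuous_toCn : Continuous (toCn (n := n)) := by
  apply (PiLp.continuous_toLp 2 (fun _ : Fin n => ℂ)).comp
    (f := fun ξ : EuclideanSpace ℝ (Fin n) => fun i => (ξ i : ℂ))
  apply continuous_pi  -- ?
  intro i
  exact Complex.continuous_ofReal.comp (PiLp.continuous_apply 2 _ i)

lemma continuous_imNorm : Continuous (imNorm (n := n)) := by
  unfold imNorm
  refine Real.continuous_sqrt.comp ?_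
  refine continuous_finset_sum _ fun i _ => ?_
  exact (Complex.continuous_im.comp (PiLp.continuous_apply 2 _ i)).pow 2

lemma sqrt_rpow_of_nonneg {t : ℝ} (ht : 0 ≤ t) (m : ℝ) :
    Real.sqrt t ^ m = t ^ (m / 2) := by
  rw [Real.sqrt_eq_rpow, ← Real.rpow_mul ht]
  congr 1
  ring

lemma norm_sq_eu (x : EuclideanSpace ℝ (Fin n)) : ∑ i, x i ^ 2 = ‖x‖ ^ 2 := by
  rw [EuclideanSpace.norm_eq]
  rw [Real.sq_sqrt (by positivity)]
  simp [Real.norm_eq_abs, _root_.sq_abs]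

lemma imNorm_toCn (x : EuclideanSpace ℝ (Fin n)) : imNorm (toCn x) = 0 := by
  simp [imNorm, toCn_apply]

lemma japRe_toCn (x : EuclideanSpace ℝ (Fin n)) :
    japRe (toCn x) = Real.sqrt (1 + ‖x‖ ^ 2) := by
  simp [japRe, toCn_apply, norm_sq_eu]

end basic

set_option maxHeartbeats 2000000 in
/-- there is `C > 0` depending only on `n` and `m < -n` such that for every
holomorphic `f` on the strip `𝒜_{ν₀}` with `|f ξ| ≤ M ⟨Re ξ⟩^m`, every `ν₁ ∈ (0, ν₀)` and
every `z ∈ ℝⁿ`, one has `|∫ e^{iz·ξ} f ξ dξ| ≤ C M e^{-ν₁ |z|}`. -/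
theorem stmt_4 (n : ℕ) (hn : 1 ≤ n) (m : ℝ) (hm : m < -(n : ℝ)) :
    ∃ C > 0, ∀ ν₀ : ℝ, 0 < ν₀ →
      ∀ (f : EuclideanSpace ℂ (Fin n) → ℂ) (M : ℝ),
        DifferentiableOn ℂ f {ξ | imNorm ξ < ν₀} →
        (∀ ξ, imNorm ξ < ν₀ → ‖f ξ‖ ≤ M * japRe ξ ^ m) →
        ∀ ν₁ : ℝ, 0 < ν₁ → ν₁ < ν₀ →
        ∀ z : EuclideanSpace ℝ (Fin n),
          ‖∫ ξ : EuclideanSpace ℝ (Fin n),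
              Complex.exp (Complex.I * ∑ j : Fin n, (z j : ℂ) * (ξ j : ℂ)) * f (toCn ξ)‖
            ≤ C * M * Real.exp (-ν₁ * ‖z‖) := by
  have hn1 : (1 : ℝ) ≤ (n : ℝ) := by exact_mod_cast hn
  have hm1 : m < -1 := lt_of_lt_of_le hm (by linarith)
  have hm0 : m < 0 := by linarith
  -- the constant
  set φ : EuclideanSpace ℝ (Fin n) → ℝ := fun x => (1 + ‖x‖ ^ 2) ^ (m / 2) with hφ
  have hφpos : ∀ x, 0 < φ x := fun x => Real.rpow_pos_of_pos (by positivity) _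
  have hφcont : Continuous φ := by
    apply Continuous.rpow_const
    · fun_prop
    · intro x; left; positivity
  have hφint : Integrable φ := by
    have h := integrable_rpow_neg_one_add_norm_sq (E := EuclideanSpace ℝ (Fin n))
      (μ := volume) (r := -m) (by simp [finrank_euclideanSpace]; linarith)
    simpa [hφ, neg_div] using h
  set C := ∫ x : EuclideanSpace ℝ (Fin n), φ x with hC
  have hCpos : 0 < C := by
    rw [hC]
    rw [MeasureTheory.integral_pos_iff_support_of_nonneg (fun x => (hφpos x).le) hφint]
    have : Function.support φ = Set.univ := by
      ext x; simp [(hφpos x).ne']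
    rw [this]
    exact isOpen_univ.measure_pos _ ⟨0, trivial⟩
  refine ⟨C, hCpos, ?_⟩
  intro ν₀ hν₀ f M hf hfb ν₁ hν₁ hν₁ν₀ z
  have hopen : IsOpen {ξ : EuclideanSpace ℂ (Fin n) | imNorm ξ < ν₀} :=
    isOpen_lt continuous_imNorm continuous_const
  have hfd : ∀ ξ, imNorm ξ < ν₀ → DifferentiableAt ℂ f ξ := fun ξ h =>
    hf.differentiableAt (hopen.mem_nhds h)
  have hM : 0 ≤ M := by
    have h0 := hfb 0 (by simp [imNorm, hν₀])
    have : japRe (0 : EuclideanSpace ℂ (Fin n)) = 1 := by simp [japRe]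
    rw [this, Real.one_rpow, mul_one] at h0
    exact le_trans (norm_nonneg _) h0
  -- pointwise bound for the integrand over the reals
  have hexp1 : ∀ (w : EuclideanSpace ℝ (Fin n)) (x : EuclideanSpace ℝ (Fin n)),
      ‖Complex.exp (Complex.I * ∑ j, (w j : ℂ) * (x j : ℂ))‖ = 1 := by
    intro w x
    have : (∑ j, (w j : ℂ) * (x j : ℂ)) = ((∑ j, w j * x j : ℝ) : ℂ) := by
      push_cast; ring
    rw [this, Complex.norm_exp]
    simp
  have hb1 : ∀ x : EuclideanSpace ℝ (Fin n),
      ‖Complex.exp (Complex.I * ∑ j, (z j : ℂ) * (x j : ℂ)) * f (toCn x)‖ ≤ M * φ x := by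
    intro x
    rw [norm_mul, hexp1 z x, one_mul]
    have h1 := hfb (toCn x) (by rw [imNorm_toCn]; exact hν₀)
    rw [japRe_toCn, sqrt_rpow_of_nonneg (by positivity)] at h1
    exact h1
  have hcont_int : Continuous fun x : EuclideanSpace ℝ (Fin n) =>
      Complex.exp (Complex.I * ∑ j, (z j : ℂ) * (x j : ℂ)) * f (toCn x) := by
    apply Continuous.mul
    · apply Complex.continuous_exp.comp
      apply Continuous.mul continuous_const
      refine continuous_finset_sum _ fun i _ => ?_
      exact Continuous.mul continuous_const
        (Complex.continuous_ofReal.comp (PiLp.continuous_apply 2 _ i))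
    · refine continuous_iff_continuousAt.2 fun x => ?_
      exact ContinuousAt.comp (x := x) (g := f)
        ((hfd _ (by rw [imNorm_toCn]; exact hν₀)).continuousAt)
        continuous_toCn.continuousAt
  have hInt : Integrable fun x : EuclideanSpace ℝ (Fin n) =>
      Complex.exp (Complex.I * ∑ j, (z j : ℂ) * (x j : ℂ)) * f (toCn x) := by
    refine (hφint.const_mul M).mono' hcont_int.aestronglyMeasurable (ae_of_all _ fun x => ?_)
    simpa using hb1 x
  rcases eq_or_ne z 0 with rfl | hz
  · -- z = 0 : direct bound
    have hnorm : ‖(0 : EuclideanSpace ℝ (Fin n))‖ = 0 := norm_zero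
    rw [hnorm, mul_zero, Real.exp_zero, mul_one]
    calc ‖∫ ξ : EuclideanSpace ℝ (Fin n),
        Complex.exp (Complex.I * ∑ j, ((0 : EuclideanSpace ℝ (Fin n)) j : ℂ) * (ξ j : ℂ))
          * f (toCn ξ)‖
        ≤ ∫ x, M * φ x := norm_integral_le_of_norm_le (hφint.const_mul M) (ae_of_all _ hb1)
      _ = M * C := by rw [MeasureTheory.integral_const_mul]
      _ ≤ C * M := le_of_eq (mul_comm M C)
  · -- z ≠ 0 : contour shift after rotating z to the first axis
    obtain ⟨k, rfl⟩ : ∃ k, n = k + 1 := ⟨n - 1, (Nat.succ_pred_eq_of_pos hn).symm⟩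
    have ht : 0 < ‖z‖ := norm_pos_iff.2 hz
    set t : ℝ := ‖z‖ with ht_def
    set u : EuclideanSpace ℝ (Fin (k+1)) := t⁻¹ • z with hu_def
    have hu : ‖u‖ = 1 := norm_smul_inv_norm hz
    have hzu : z = t • u := (smul_inv_smul₀ ht.ne' z).symm
    have hu_sq : ∑ j, u j ^ 2 = 1 := by rw [norm_sq_eu, hu, one_pow]
    obtain ⟨b, hb0⟩ : ∃ b : OrthonormalBasis (Fin (k+1)) ℝ (EuclideanSpace ℝ (Fin (k+1))),
        b 0 = u := by
      have hcard : Module.finrank ℝ (EuclideanSpace ℝ (Fin (k+1)))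
          = Fintype.card (Fin (k+1)) := by simp [finrank_euclideanSpace]
      have horth : Orthonormal ℝ (({0} : Set (Fin (k+1))).restrict fun _ => u) := by
        refine ⟨fun i => hu, fun i j hij => absurd (Subtype.ext ?_) hij⟩
        have hi := i.2; have hj := j.2
        simp only [Set.mem_singleton_iff] at hi hj
        rw [hi, hj]
      obtain ⟨b, hb⟩ := horth.exists_orthonormalBasis_extension_of_card_eq hcard
      exact ⟨b, hb 0 rfl⟩
    set T := b.repr.symm with hT_def
    have hTe0 : T (EuclideanSpace.single (0 : Fin (k+1)) (1:ℝ)) = u := by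
      rw [hT_def, b.repr_symm_single, hb0]
    set me := (MeasurableEquiv.toLp 2 (Fin (k+1) → ℝ)).symm with hme_def
    have hme : MeasurePreserving me :=
      EuclideanSpace.volume_preserving_symm_measurableEquiv_toLp _
    set e2 := MeasurableEquiv.piFinSuccAbove (fun _ : Fin (k+1) => ℝ) 0 with he2_def
    have he2 : MeasurePreserving e2 :=
      MeasureTheory.volume_preserving_piFinSuccAbove _ 0
    set EQ : (ℝ × (Fin k → ℝ)) ≃ᵐ EuclideanSpace ℝ (Fin (k+1)) :=
      e2.symm.trans (me.symm.trans T.toHomeomorph.toMeasurableEquiv) with hEQ_def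
    have hEQmp : MeasurePreserving EQ := by
      have h1 : MeasurePreserving (⇑T) := b.measurePreserving_repr_symm
      exact h1.comp ((MeasurePreserving.symm me hme).comp (MeasurePreserving.symm e2 he2))
    -- coordinates of the composite map
    set cvec : ℝ → (Fin k → ℝ) → EuclideanSpace ℝ (Fin (k+1)) :=
      fun s y => me.symm (e2.symm (s, y)) with hcvec_def
    have hEQ_pt : ∀ p : ℝ × (Fin k → ℝ), EQ p = T (cvec p.1 p.2) := fun p => rfl
    have hc0 : ∀ s y, cvec s y 0 = s := by
      intro s y
      show (Fin.insertNth 0 s y : ∀ _ : Fin (k+1), ℝ) 0 = s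
      simp
    have hcsucc : ∀ s y (i : Fin k), cvec s y i.succ = y i := by
      intro s y i
      show (Fin.insertNth 0 s y : ∀ _ : Fin (k+1), ℝ) i.succ = y i
      have := Fin.insertNth_apply_succAbove (α := fun _ : Fin (k+1) => ℝ) 0 s y i
      simpa using this
    have hcdec : ∀ s y, cvec s y
        = s • EuclideanSpace.single (0 : Fin (k+1)) (1:ℝ) + cvec 0 y := by
      intro s y
      ext j
      induction j using Fin.cases with
      | zero => simp [hc0, PiLp.add_apply, PiLp.smul_apply, EuclideanSpace.single_apply]
      | succ i => simp [hcsucc, PiLp.add_apply, PiLp.smul_apply, EuclideanSpace.single_apply,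
          Fin.succ_ne_zero]
    set V : (Fin k → ℝ) → EuclideanSpace ℝ (Fin (k+1)) := fun y => T (cvec 0 y) with hV_def
    have hTdec : ∀ s y, T (cvec s y) = s • u + V y := by
      intro s y
      rw [hcdec, map_add, _root_.map_smul, hTe0]
    have hortho : ∀ y, (inner ℝ u (V y) : ℝ) = 0 := by
      intro y
      have h := LinearIsometryEquiv.inner_map_map (𝕜 := ℝ) T
        (EuclideanSpace.single (0 : Fin (k+1)) (1:ℝ)) (cvec 0 y)
      rw [hTe0] at h
      rw [show V y = T (cvec 0 y) from rfl, h, EuclideanSpace.inner_single_left]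
      simp [hc0]
    have hnormdec : ∀ (s : ℝ) y, ‖s • u + V y‖^2 = s^2 + ‖V y‖^2 := by
      intro s y
      rw [@norm_add_sq_real]
      rw [real_inner_smul_left, hortho, mul_zero]
      rw [norm_smul, hu, mul_one, Real.norm_eq_abs, _root_.sq_abs]
      ring
    have hdot : ∀ v w : EuclideanSpace ℝ (Fin (k+1)), ∑ j, v j * w j = (inner ℝ v w : ℝ) := by
      intro v w
      rw [PiLp.inner_apply]
      simp [RCLike.inner_apply, mul_comm]
    have hinner : ∀ s y, ∑ j, z j * (T (cvec s y)) j = t * s := by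
      intro s y
      rw [hdot, hTdec, hzu, real_inner_smul_left, inner_add_right, real_inner_smul_right,
        hortho, real_inner_self_eq_norm_sq, hu]
      ring
    set U : EuclideanSpace ℂ (Fin (k+1)) := toCn u with hU_def
    have hPc : ∀ (s : ℝ) y, toCn (s • u + V y) = toCn (V y) + (s : ℂ) • U := by
      intro s y
      ext j
      simp only [toCn_apply, PiLp.add_apply, PiLp.smul_apply, smul_eq_mul, hU_def]
      push_cast
      ring
    have hjap : ∀ y (w : ℂ), japRe (toCn (V y) + w • U)
        = Real.sqrt (1 + (w.re^2 + ‖V y‖^2)) := by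
      intro y w
      unfold japRe
      congr 1
      have h1 : ∀ j, ((toCn (V y) + w • U) j).re = (w.re • u + V y) j := by
        intro j
        simp [toCn_apply, PiLp.add_apply, PiLp.smul_apply, smul_eq_mul, hU_def,
          Complex.add_re, Complex.mul_re]
        ring
      calc 1 + ∑ j, ((toCn (V y) + w • U) j).re ^ 2
          = 1 + ∑ j, ((w.re • u + V y) j)^2 := by
            congr 1; exact Finset.sum_congr rfl fun j _ => by rw [h1 j]
        _ = 1 + ‖w.re • u + V y‖^2 := by rw [norm_sq_eu]
        _ = 1 + (w.re^2 + ‖V y‖^2) := by rw [hnormdec]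
    have himn : ∀ y (w : ℂ), imNorm (toCn (V y) + w • U) = |w.im| := by
      intro y w
      unfold imNorm
      have h1 : ∀ j, ((toCn (V y) + w • U) j).im = w.im * u j := by
        intro j
        simp [toCn_apply, PiLp.add_apply, PiLp.smul_apply, smul_eq_mul, hU_def,
          Complex.add_im, Complex.mul_im]
      calc Real.sqrt (∑ j, ((toCn (V y) + w • U) j).im ^ 2)
          = Real.sqrt (∑ j, (w.im * u j)^2) := by
            congr 1; exact Finset.sum_congr rfl fun j _ => by rw [h1 j]
        _ = Real.sqrt (w.im^2 * ∑ j, u j ^2) := by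
            congr 1; rw [Finset.mul_sum]; exact Finset.sum_congr rfl fun j _ => by ring
        _ = |w.im| := by rw [hu_sq, mul_one, Real.sqrt_sq_eq_abs]
    -- bound on f along shifted slices
    have hfP : ∀ y (w : ℂ), |w.im| < ν₀ →
        ‖f (toCn (V y) + w • U)‖ ≤ M * (1 + (w.re^2 + ‖V y‖^2)) ^ (m/2) := by
      intro y w hw
      have himlt : imNorm (toCn (V y) + w • U) < ν₀ := by rw [himn]; exact hw
      have h := hfb _ himlt
      rw [hjap y w, sqrt_rpow_of_nonneg (by positivity)] at h
      exact h
    -- integrability of one-dimensional slices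
    have hBint : ∀ A : ℝ, 0 ≤ A → Integrable (fun s : ℝ => (1 + (s^2 + A)) ^ (m/2)) := by
      intro A hA
      have h1 : Integrable (fun s : ℝ => (1 + ‖s‖^2) ^ (m/2)) := by
        have := integrable_rpow_neg_one_add_norm_sq (E := ℝ) (μ := volume) (r := -m)
          (by simp; linarith)
        simpa [neg_div] using this
      refine h1.mono' ?_ (ae_of_all _ fun s => ?_)
      · apply Continuous.aestronglyMeasurable
        apply Continuous.rpow_const (by fun_prop)
        intro s; left; positivity
      · rw [Real.norm_of_nonneg (Real.rpow_nonneg (by positivity) _),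
          Real.norm_eq_abs, _root_.sq_abs]
        exact Real.rpow_le_rpow_of_nonpos (by positivity) (by linarith) (by linarith)
    have hBtop : ∀ A : ℝ, Tendsto (fun s : ℝ => (1 + (s^2 + A)) ^ (m/2)) atTop (𝓝 0) := by
      intro A
      have hbase : Tendsto (fun s : ℝ => 1 + (s^2 + A)) atTop atTop :=
        tendsto_atTop_add_const_left _ 1
          (tendsto_atTop_add_const_right _ A (tendsto_pow_atTop two_ne_zero))
      have hrpow : Tendsto (fun x : ℝ => x ^ (m/2)) atTop (𝓝 0) := by
        have := tendsto_rpow_neg_atTop (y := -(m/2)) (by linarith)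
        simpa [neg_neg] using this
      exact hrpow.comp hbase
    have hBbot : ∀ A : ℝ, Tendsto (fun s : ℝ => (1 + (s^2 + A)) ^ (m/2)) atBot (𝓝 0) := by
      intro A
      have := (hBtop A).comp tendsto_neg_atBot_atTop
      refine this.congr fun s => ?_
      simp [neg_sq]
    -- the slice integrals
    set K : (Fin k → ℝ) → ℝ := fun y => ∫ s : ℝ, (1 + (s^2 + ‖V y‖^2)) ^ (m/2) with hK_def
    -- the key per-slice estimate via the contour shift
    have hkey : ∀ y, ‖∫ s : ℝ, Complex.exp (Complex.I * ((t * s : ℝ) : ℂ))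
          * f (toCn (V y) + (s : ℂ) • U)‖
        ≤ Real.exp (-(t * ν₁)) * (M * K y) := by
      intro y
      set A := ‖V y‖^2 with hA_def
      have hA : 0 ≤ A := sq_nonneg _
      set g : ℂ → ℂ := fun w => Complex.exp (Complex.I * t * w) * f (toCn (V y) + w • U)
        with hg_def
      have hstrip : ∀ w : ℂ, w.im ∈ Set.Icc 0 ν₁ → |w.im| < ν₀ := by
        intro w hw
        rw [_root_.abs_of_nonneg hw.1]
        exact lt_of_le_of_lt hw.2 hν₁ν₀
      have hgd : ∀ w : ℂ, w.im ∈ Set.Icc 0 ν₁ → DifferentiableAt ℂ g w := by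
        intro w hw
        apply DifferentiableAt.mul
        · exact ((differentiableAt_id.const_mul (Complex.I * t)).cexp)
        · have hdin : DifferentiableAt ℂ (fun w : ℂ => toCn (V y) + w • U) w :=
            (differentiableAt_id.smul_const U).const_add _
          exact DifferentiableAt.comp w
            (hfd _ (by rw [himn]; exact hstrip w hw)) hdin
      have hgB : ∀ w : ℂ, w.im ∈ Set.Icc 0 ν₁ →
          ‖g w‖ ≤ M * (1 + (w.re^2 + A)) ^ (m/2) := by
        intro w hw
        rw [hg_def]
        simp only []
        rw [norm_mul]
        have h1 : ‖Complex.exp (Complex.I * t * w)‖ ≤ 1 := by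
          rw [Complex.norm_exp]
          have hre : (Complex.I * t * w).re = -(t * w.im) := by
            simp [Complex.mul_re, Complex.mul_im]
          rw [hre]
          have : 0 ≤ t * w.im := mul_nonneg ht.le hw.1
          exact Real.exp_le_one_iff.2 (by linarith)
        have h2 := hfP y w (hstrip w hw)
        calc ‖Complex.exp (Complex.I * t * w)‖ * ‖f (toCn (V y) + w • U)‖
            ≤ 1 * (M * (1 + (w.re^2 + A)) ^ (m/2)) :=
              mul_le_mul h1 h2 (norm_nonneg _) zero_le_one
          _ = M * (1 + (w.re^2 + A)) ^ (m/2) := one_mul _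
      have hshift := shift1d g ν₁ hν₁.le hgd
        (fun s => M * (1 + (s^2 + A)) ^ (m/2)) hgB
        ((hBint A hA).const_mul M)
        (by simpa using (hBtop A).const_mul M)
        (by simpa using (hBbot A).const_mul M)
      have hgeq : (fun s : ℝ => Complex.exp (Complex.I * ((t * s : ℝ) : ℂ))
          * f (toCn (V y) + (s : ℂ) • U)) = fun s : ℝ => g s := by
        funext s
        rw [hg_def]
        push_cast
        ring_nf
      rw [hgeq, hshift]
      have hdom : Integrable (fun s : ℝ =>
          Real.exp (-(t * ν₁)) * (M * (1 + (s^2 + A)) ^ (m/2))) :=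
        (((hBint A hA).const_mul M).const_mul _)
      refine le_trans (norm_integral_le_of_norm_le hdom (ae_of_all _ fun s => ?_)) ?_
      · rw [hg_def]
        simp only []
        rw [norm_mul]
        have h1 : ‖Complex.exp (Complex.I * t * (s + ν₁ * Complex.I))‖
            = Real.exp (-(t * ν₁)) := by
          rw [Complex.norm_exp]
          congr 1
          simp [Complex.mul_re, Complex.mul_im]
        have him : ((s : ℂ) + ν₁ * Complex.I).im = ν₁ := by simp
        have hre : ((s : ℂ) + ν₁ * Complex.I).re = s := by simp
        have h2 := hfP y ((s : ℂ) + ν₁ * Complex.I)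
          (by rw [him, _root_.abs_of_nonneg hν₁.le]; exact hν₁ν₀)
        rw [hre] at h2
        rw [h1]
        exact mul_le_mul_of_nonneg_left h2 (Real.exp_nonneg _)
      · rw [MeasureTheory.integral_const_mul, MeasureTheory.integral_const_mul]
    -- transport the integral through the measure-preserving equivalence
    set IG : EuclideanSpace ℝ (Fin (k+1)) → ℂ := fun x =>
      Complex.exp (Complex.I * ∑ j, (z j : ℂ) * (x j : ℂ)) * f (toCn x) with hIG_def
    have hstep1 : ∫ x, IG x = ∫ p : ℝ × (Fin k → ℝ), IG (EQ p) :=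
      (hEQmp.integral_comp EQ.measurableEmbedding IG).symm
    have hcomp : ∀ p : ℝ × (Fin k → ℝ), IG (EQ p)
        = Complex.exp (Complex.I * ((t * p.1 : ℝ) : ℂ))
          * f (toCn (V p.2) + ((p.1 : ℝ) : ℂ) • U) := by
      intro p
      rw [hEQ_pt, hIG_def]
      simp only []
      have hs : (∑ j, (z j : ℂ) * ((T (cvec p.1 p.2)) j : ℂ))
          = ((∑ j, z j * (T (cvec p.1 p.2)) j : ℝ) : ℂ) := by push_cast; ring
      rw [hs, hinner]
      rw [hTdec, hPc]
    have hIntp : Integrable (fun p : ℝ × (Fin k → ℝ) => IG (EQ p)) :=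
      (hEQmp.integrable_comp_emb EQ.measurableEmbedding).2 hInt
    have hfub : ∫ p : ℝ × (Fin k → ℝ), IG (EQ p)
        = ∫ y : Fin k → ℝ, ∫ s : ℝ, IG (EQ (s, y)) := by
      rw [MeasureTheory.Measure.volume_eq_prod] at hIntp ⊢
      exact MeasureTheory.integral_prod_symm _ hIntp
    -- integrability of the dominating function
    have hφEQ : ∀ p : ℝ × (Fin k → ℝ), φ (EQ p) = (1 + (p.1^2 + ‖V p.2‖^2)) ^ (m/2) := by
      intro p
      rw [hφ]
      simp only []
      rw [hEQ_pt, hTdec, hnormdec]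
    have hφp : Integrable (fun p : ℝ × (Fin k → ℝ) => (1 + (p.1^2 + ‖V p.2‖^2)) ^ (m/2)) := by
      have h1 : Integrable (fun p : ℝ × (Fin k → ℝ) => φ (EQ p)) :=
        (hEQmp.integrable_comp_emb EQ.measurableEmbedding).2 hφint
      exact h1.congr (ae_of_all _ fun p => (hφEQ p))
    have hKint : Integrable K := by
      have h2 : Integrable (fun y : Fin k → ℝ =>
          ∫ s : ℝ, (1 + (s^2 + ‖V y‖^2)) ^ (m/2)) := by
        have := hφp
        rw [MeasureTheory.Measure.volume_eq_prod] at this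
        exact this.integral_prod_right
      exact h2
    have hKval : ∫ y : Fin k → ℝ, K y = C := by
      have h1 : ∫ p : ℝ × (Fin k → ℝ), φ (EQ p) = C :=
        hEQmp.integral_comp EQ.measurableEmbedding φ
      have h2 : ∫ p : ℝ × (Fin k → ℝ), φ (EQ p)
          = ∫ y : Fin k → ℝ, ∫ s : ℝ, (1 + (s^2 + ‖V y‖^2)) ^ (m/2) := by
        have hInt' : Integrable (fun p : ℝ × (Fin k → ℝ) => φ (EQ p)) :=
          (hEQmp.integrable_comp_emb EQ.measurableEmbedding).2 hφint
        rw [MeasureTheory.Measure.volume_eq_prod] at hInt' ⊢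
        rw [MeasureTheory.integral_prod_symm _ hInt']
        refine integral_congr_ae (ae_of_all _ fun y => ?_)
        refine integral_congr_ae (ae_of_all _ fun s => ?_)
        exact hφEQ (s, y)
      rw [hK_def]
      rw [← h2, h1]
    have hGint : Integrable (fun y : Fin k → ℝ => Real.exp (-(t * ν₁)) * (M * K y)) :=
      ((hKint.const_mul M).const_mul _)
    calc ‖∫ ξ : EuclideanSpace ℝ (Fin (k+1)), Complex.exp (Complex.I
            * ∑ j, (z j : ℂ) * (ξ j : ℂ)) * f (toCn ξ)‖
        = ‖∫ y : Fin k → ℝ, ∫ s : ℝ, IG (EQ (s, y))‖ := by rw [← hfub, ← hstep1]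
      _ ≤ ∫ y : Fin k → ℝ, Real.exp (-(t * ν₁)) * (M * K y) := by
          refine norm_integral_le_of_norm_le hGint (ae_of_all _ fun y => ?_)
          have : (fun s : ℝ => IG (EQ (s, y)))
              = fun s : ℝ => Complex.exp (Complex.I * ((t * s : ℝ) : ℂ))
                * f (toCn (V y) + ((s : ℝ) : ℂ) • U) := by
            funext s; exact hcomp (s, y)
          rw [this]
          exact hkey y
      _ = Real.exp (-(t * ν₁)) * (M * C) := by
          rw [MeasureTheory.integral_const_mul, MeasureTheory.integral_const_mul, hKval]
      _ ≤ C * M * Real.exp (-ν₁ * t) := by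
          rw [show -(t * ν₁) = -ν₁ * t by ring]
          exact le_of_eq (by ring)
end

section
/- Let U ⊆ ℝⁿ be open, let φ : U → ℝ be differentiable on U, let V : U → ℝ, and let δ₀, C, h > 0. Assume that for every x ∈ U: (i) |∇φ(x)|² ≤ V(x); (ii) V(x) ≥ δ₀·φ(x); (iii) φ(x) ≥ C·h. Then the function ψ(x) := φ(x) − C·h·log(φ(x)/h) is differentiable on U and satisfies |∇ψ(x)|² ≤ V(x) − δ₀·C·h for every x ∈ U. -/
open InnerProductSpace

lemma hasGradientAt_comp_real {F : Type*} [NormedAddCommGroup F] [InnerProductSpace ℝ F]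
    [CompleteSpace F] {f : F → ℝ} {f' : F} {x : F}
    (hf : HasGradientAt f f' x) {g : ℝ → ℝ} {g' : ℝ} (hg : HasDerivAt g g' (f x)) :
    HasGradientAt (g ∘ f) (g' • f') x := by
  rw [hasGradientAt_iff_hasFDerivAt] at hf ⊢
  have H := hg.comp_hasFDerivAt x hf
  refine H.congr_fderiv ?_
  ext v
  simp [real_inner_smul_left, mul_comm]

/-- logarithmic modification of an Agmon weight.  If on an open set `U` one has
`|∇φ|² ≤ V`, `V ≥ δ₀ φ` and `φ ≥ C h`, then `ψ = φ - C h log(φ/h)` is differentiable on `U`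
and satisfies `|∇ψ|² ≤ V - δ₀ C h` on `U`. -/
theorem stmt_8 (n : ℕ) (hn : 1 ≤ n)
    (U : Set (EuclideanSpace ℝ (Fin n))) (hU : IsOpen U)
    (φ V : EuclideanSpace ℝ (Fin n) → ℝ)
    (hφ : ∀ x ∈ U, DifferentiableAt ℝ φ x)
    (δ₀ C h : ℝ) (hδ₀ : 0 < δ₀) (hC : 0 < C) (hh : 0 < h)
    (h1 : ∀ x ∈ U, ‖gradient φ x‖ ^ 2 ≤ V x)
    (h2 : ∀ x ∈ U, δ₀ * φ x ≤ V x)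
    (h3 : ∀ x ∈ U, C * h ≤ φ x) :
    (∀ x ∈ U, DifferentiableAt ℝ
        (fun y => φ y - C * h * Real.log (φ y / h)) x) ∧
    ∀ x ∈ U, ‖gradient (fun y => φ y - C * h * Real.log (φ y / h)) x‖ ^ 2
        ≤ V x - δ₀ * C * h := by
  have key : ∀ x ∈ U, HasGradientAt (fun y => φ y - C * h * Real.log (φ y / h))
      ((1 - C * h / φ x) • gradient φ x) x := by
    intro x hx
    have hp : 0 < φ x := lt_of_lt_of_le (by positivity) (h3 x hx)
    have hgφ : HasGradientAt φ (gradient φ x) x := (hφ x hx).hasGradientAt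
    have hlog : HasDerivAt (fun t : ℝ => Real.log (t / h)) (1 / φ x) (φ x) := by
      have hd : HasDerivAt (fun t : ℝ => t / h) (1 / h) (φ x) :=
        (hasDerivAt_id (φ x)).div_const h
      have h2' := (Real.hasDerivAt_log (by positivity : φ x / h ≠ 0)).comp (φ x) hd
      refine h2'.congr_deriv ?_
      field_simp
    have hg : HasDerivAt (fun t : ℝ => t - C * h * Real.log (t / h))
        (1 - C * h / φ x) (φ x) := by
      have := (hasDerivAt_id (φ x)).sub ((hlog.const_mul (C * h)))
      exact this.congr_deriv (by ring)
    exact hasGradientAt_comp_real hgφ hg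
  constructor
  · intro x hx
    exact (key x hx).differentiableAt
  · intro x hx
    have hp : 0 < φ x := lt_of_lt_of_le (by positivity) (h3 x hx)
    rw [(key x hx).gradient]
    rw [norm_smul]
    have ht1 : C * h / φ x ≤ 1 := by
      rw [div_le_one hp]; exact h3 x hx
    have ht0 : 0 < C * h / φ x := by positivity
    have htp : C * h / φ x * φ x = C * h := by field_simp
    set t := C * h / φ x with htdef
    have habs : ‖(1 - t : ℝ)‖ = 1 - t := by
      rw [Real.norm_eq_abs, abs_of_nonneg (by linarith)]
    rw [habs]
    have ha := h1 x hx
    have hb := h2 x hx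
    have ha0 : (0:ℝ) ≤ ‖gradient φ x‖ ^ 2 := by positivity
    have hV0 : 0 ≤ V x := le_trans (by positivity) hb
    nlinarith [mul_le_mul_of_nonneg_left ha (sq_nonneg (1 - t)),
      mul_le_mul_of_nonneg_left hb (le_of_lt ht0), sq_nonneg (1 - t),
      mul_nonneg (mul_nonneg ht0.le (by linarith : (0:ℝ) ≤ 1 - t)) hV0]
end
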